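/- Suppose 0 < β < 1/(2N+1), and let Γ_t = ⋃_{j=0}^m (Γ + t_j) be a self-similar set, where t = (t_0, t_1, …, t_m) ∈ ℝ^{m+1} with 0 = t_0 < t_1 < … < t_m. If r·Γ_t + b ⊆ Γ_t for some reals r, b with 0 < |r| < 1, then |r| = β^q for some q ∈ ℤ_+. -/

import Mathlib

/-!
`Γ` lies in the `N + 1` cylinders `φ_i[0,1]` of length `β`, separated by gaps of length
`(1-β)/N - β > β`. If `λΓ + c ⊆ Γ` with `0 < λ < 1`, then `λ ≤ β`, and if `λ < β` the image lies
in a single cylinder, so peeling off `φ_i` gives `(λ/β)Γ + c' ⊆ Γ`; by induction `λ` is a power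
of `β`.

For `Γ_t`, a piece of the self-similar structure covering an endpoint of `Γ_t` fixes an
endpoint, possibly after composing two orientation-reversing pieces; reflecting `t` to `t̂` if
necessary, we get a contraction `x ↦ ρx` of `Γ_t`. As `Γ_t` agrees with `Γ` near `0`, some
`ρ^n` maps `Γ_t` into `Γ`, so `ρ^n` and `ρ^n |r|` are both powers of `β`.
-/

noncomputable section

namespace HSCantor

/-- A `D`-coding of `x`: a digit sequence `c` with digits in `D ⊆ ℤ` such that
`x = (1-β)/N · Σ_{k=1}^∞ c_k β^{k-1}` (here indexed from `k = 0`). -/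
def IsCoding (N : ℕ) (β : ℝ) (D : Set ℤ) (x : ℝ) (c : ℕ → ℤ) : Prop :=
  (∀ k, c k ∈ D) ∧ x = (1 - β) / N * ∑' k : ℕ, (c k : ℝ) * β ^ k

/-- The set `Γ_{β,D}` for a digit set `D ⊆ ℤ`. -/
def cantorD (N : ℕ) (β : ℝ) (D : Set ℤ) : Set ℝ := { x | ∃ c, IsCoding N β D x c }

/-- The homogeneous symmetric Cantor set `Γ = Γ_{β,{0,1,…,N}}`. -/
def Gamma (N : ℕ) (β : ℝ) : Set ℝ := cantorD N β (Set.Icc 0 (N : ℤ))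

/-- `E ⊆ ℝ` is a self-similar set: it is nonempty, compact, and is the union of its
images under finitely many contracting similitudes `x ↦ r x + b`, `0 < |r| < 1`. -/
def IsSelfSimilar (E : Set ℝ) : Prop :=
  E.Nonempty ∧ IsCompact E ∧ ∃ F : Finset (ℝ × ℝ),
    (∀ p ∈ F, 0 < |p.1| ∧ |p.1| < 1) ∧
    E = ⋃ p ∈ F, (fun x => p.1 * x + p.2) '' E

/-- `Γ_t = ⋃_{j=0}^m (Γ + t_j)`. -/
def GammaT (N : ℕ) (β : ℝ) {m : ℕ} (t : Fin (m + 1) → ℝ) : Set ℝ :=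
  ⋃ j, (fun x => x + t j) '' Gamma N β

/-- The set `T = ⋃_{n≥1} { (1-β)/N · Σ_{k=1}^n j_k β^{-k} : j_k ∈ {0,…,N} }`. -/
def Tset (N : ℕ) (β : ℝ) : Set ℝ :=
  { x | ∃ n : ℕ, 1 ≤ n ∧ ∃ c : ℕ → ℕ, (∀ k, c k ≤ N) ∧
      x = (1 - β) / N * ∑ k ∈ Finset.Icc 1 n, (c k : ℝ) * β ^ (-(k : ℤ)) }

/-- `d` is a digit representation of the translation vector `t` with `τ` digits:
`t_j = (1-β)/N · Σ_{k=1}^τ d_{j,k} β^{-k}` with all digits in `{0,…,N}`. -/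
def IsDigitRep (N : ℕ) (β : ℝ) {m : ℕ} (t : Fin (m + 1) → ℝ) (τ : ℕ)
    (d : Fin (m + 1) → ℕ → ℕ) : Prop :=
  (∀ j k, d j k ≤ N) ∧
    ∀ j, t j = (1 - β) / N * ∑ k ∈ Finset.Icc 1 τ, (d j k : ℝ) * β ^ (-(k : ℤ))

/-- `d` is a digit representation of `t` with `τ = τ_t` digits, `τ_t` minimal. -/
def IsMinimalRep (N : ℕ) (β : ℝ) {m : ℕ} (t : Fin (m + 1) → ℝ) (τ : ℕ)
    (d : Fin (m + 1) → ℕ → ℕ) : Prop :=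
  IsDigitRep N β t τ d ∧ ∀ τ' < τ, ∀ d', ¬ IsDigitRep N β t τ' d'

/-- `s_k = max_{0 ≤ j ≤ m} t_{j,k}`. -/
def digitSup {m : ℕ} (d : Fin (m + 1) → ℕ → ℕ) (k : ℕ) : ℕ :=
  Finset.univ.sup fun j => d j k

/-- Words of length `n` over the alphabet `{0,1,…,N}`, as lists of naturals. -/
def Words (N n : ℕ) : Set (List ℕ) := { w | w.length = n ∧ ∀ x ∈ w, x ≤ N }

/-- `Ω_t^n`: words `i_1 … i_n ∈ {0,…,N}^n` with `i_{n+1-k} ≤ N - s_k` for `1 ≤ k ≤ τ`.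
(A list `w = [i_1, …, i_n]` satisfies `i_{n+1-k} = w.getD (n-k) 0`.) -/
def Omega (N τ : ℕ) (s : ℕ → ℕ) (n : ℕ) : Set (List ℕ) :=
  { w | w ∈ Words N n ∧ ∀ k, 1 ≤ k → k ≤ τ → w.getD (n - k) 0 + s k ≤ N }

/-- `Ω̂_t^n`: words `i_1 … i_n ∈ {0,…,N}^n` with `i_{n+1-k} ≥ s_k` for `1 ≤ k ≤ τ`. -/
def OmegaHat (N τ : ℕ) (s : ℕ → ℕ) (n : ℕ) : Set (List ℕ) :=
  { w | w ∈ Words N n ∧ ∀ k, 1 ≤ k → k ≤ τ → s k ≤ w.getD (n - k) 0 }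

/-- `W_t^τ = A_t^τ ∪ Â_t^τ`: words obtained from a word in `Ω_t^τ` (resp. `Ω̂_t^τ`)
by adding (resp. subtracting) the digits of some `t_j` to the last `τ` positions. -/
def Wset (N : ℕ) {m : ℕ} (τ : ℕ) (d : Fin (m + 1) → ℕ → ℕ) : Set (List ℕ) :=
  { v | ∃ w ∈ Omega N τ (digitSup d) τ, ∃ j : Fin (m + 1),
      v = List.ofFn fun idx : Fin τ => w.getD idx 0 + d j (τ - (idx : ℕ)) } ∪
  { v | ∃ w ∈ OmegaHat N τ (digitSup d) τ, ∃ j : Fin (m + 1),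
      v = List.ofFn fun idx : Fin τ => w.getD idx 0 - d j (τ - (idx : ℕ)) }

/-- The symbolic admissibility condition:
`⋃_{n=τ}^ℓ {0,…,N}^{n-τ} × W_t^τ × {0,…,N}^{ℓ-n} = {0,…,N}^ℓ` for some `ℓ ≥ τ`. -/
def AdmissibleWith (N : ℕ) {m : ℕ} (τ : ℕ) (d : Fin (m + 1) → ℕ → ℕ) : Prop :=
  ∃ ℓ, τ ≤ ℓ ∧
    (⋃ n ∈ Finset.Icc τ ℓ,
      { z : List ℕ | ∃ u ∈ Words N (n - τ), ∃ w ∈ Wset N τ d, ∃ v ∈ Words N (ℓ - n),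
          z = u ++ w ++ v }) = Words N ℓ

/-- `t` is an admissible translation vector. -/
def IsAdmissible (N : ℕ) (β : ℝ) {m : ℕ} (t : Fin (m + 1) → ℝ) : Prop :=
  (∀ j, t j ∈ Tset N β) ∧
    ∃ τ d, IsMinimalRep N β t τ d ∧ AdmissibleWith N τ d

/-- The vertex set `V_t = {0,…,N}^τ \ W_t^τ` of the directed graph `G_t`. -/
def Vset (N : ℕ) {m : ℕ} (τ : ℕ) (d : Fin (m + 1) → ℕ → ℕ) : Set (List ℕ) :=
  Words N τ \ Wset N τ d

/-- The graph on `V` with an edge `i → j` iff `i_2 … i_τ = j_1 … j_{τ-1}` has a cycle: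
a directed path of positive length starting and ending at the same vertex. -/
def HasCycle (V : Set (List ℕ)) : Prop :=
  ∃ (L : ℕ) (p : ℕ → List ℕ), 0 < L ∧ (∀ i ≤ L, p i ∈ V) ∧
    (∀ i < L, (p i).drop 1 = (p (i + 1)).dropLast) ∧ p 0 = p L

open Classical in
/-- The adjacency matrix of the directed graph `G_t`, indexed by all words of length `τ`
over `{0,…,N}`; its `(i,j)` entry is `1` exactly when `i, j ∈ V_t` and there is a
directed edge `i → j`, and the rows and columns outside `V_t` are zero. -/
def adjMat (N τ : ℕ) (V : Set (List ℕ)) :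
    Matrix (Fin τ → Fin (N + 1)) (Fin τ → Fin (N + 1)) ℕ :=
  fun i j =>
    if (List.ofFn fun k => (i k : ℕ)) ∈ V ∧ (List.ofFn fun k => (j k : ℕ)) ∈ V ∧
        (List.ofFn fun k => (i k : ℕ)).drop 1 = (List.ofFn fun k => (j k : ℕ)).dropLast
    then 1 else 0

/-- `φ_i(x) = βx + i(1-β)/N`. -/
def phi (N : ℕ) (β : ℝ) (i : ℕ) (x : ℝ) : ℝ := β * x + i * (1 - β) / N

/-- `φ_{i_1 … i_n} = φ_{i_1} ∘ ⋯ ∘ φ_{i_n}`. -/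
def phiWord (N : ℕ) (β : ℝ) (w : List ℕ) (x : ℝ) : ℝ := w.foldr (phi N β) x

/-- The conjugate translation vector `t̂_j = t_m - t_{m-j}`. -/
def conj {m : ℕ} (t : Fin (m + 1) → ℝ) : Fin (m + 1) → ℝ :=
  fun j => t (Fin.last m) - t ⟨m - (j : ℕ), Nat.lt_succ_of_le (Nat.sub_le m j)⟩

end HSCantor

section Extremes

variable {α : Type*} [PartialOrder α] {E : Set α} {a b : α} {f : α → α}

lemma IsLeast.apply_eq_of_monotone (ha : IsLeast E a) (hf : Monotone f)
    (hfE : Set.MapsTo f E E) (hy : a ∈ f '' E) : f a = a := by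
  obtain ⟨y, hyE, hya⟩ := hy
  exact le_antisymm ((hf (ha.2 hyE)).trans_eq hya) (ha.2 (hfE ha.1))

lemma IsLeast.apply_eq_of_antitone (ha : IsLeast E a) (hb : IsGreatest E b) (hf : Antitone f)
    (hfE : Set.MapsTo f E E) (hy : a ∈ f '' E) : f b = a := by
  obtain ⟨y, hyE, hya⟩ := hy
  exact le_antisymm ((hf (hb.2 hyE)).trans_eq hya) (ha.2 (hfE hb.1))

lemma IsGreatest.apply_eq_of_monotone (hb : IsGreatest E b) (hf : Monotone f)
    (hfE : Set.MapsTo f E E) (hy : b ∈ f '' E) : f b = b := by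
  obtain ⟨y, hyE, hyb⟩ := hy
  exact le_antisymm (hb.2 (hfE hb.1)) (hyb.ge.trans (hf (hb.2 hyE)))

lemma IsGreatest.apply_eq_of_antitone (ha : IsLeast E a) (hb : IsGreatest E b)
    (hf : Antitone f) (hfE : Set.MapsTo f E E) (hy : b ∈ f '' E) : f a = b := by
  obtain ⟨y, hyE, hyb⟩ := hy
  exact le_antisymm (hb.2 (hfE ha.1)) (hyb.ge.trans (hf (ha.2 hyE)))

end Extremes

namespace HSCantor

section Gamma

variable {N : ℕ} {β : ℝ}

lemma summable_coding (hβ0 : 0 ≤ β) (hβ1 : β < 1) {c : ℕ → ℤ}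
    (hc : ∀ k, c k ∈ Set.Icc 0 (N : ℤ)) : Summable fun k => (c k : ℝ) * β ^ k := by
  refine ((summable_geometric_of_lt_one hβ0 hβ1).mul_left (N : ℝ)).of_nonneg_of_le
    (fun k => mul_nonneg ?_ (pow_nonneg hβ0 k)) (fun k => ?_)
  · exact_mod_cast (hc k).1
  · exact mul_le_mul_of_nonneg_right (by exact_mod_cast (hc k).2) (pow_nonneg hβ0 k)

lemma div_mul_tsum_const_mul_geometric (hN : 0 < N) (hβ0 : 0 ≤ β) (hβ1 : β < 1) :
    (1 - β) / N * ∑' k : ℕ, (N : ℝ) * β ^ k = 1 := by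
  have : (1 : ℝ) - β ≠ 0 := by linarith
  rw [tsum_mul_left, tsum_geometric_of_lt_one hβ0 hβ1]
  field_simp

lemma coding_eq_phi (hβ0 : 0 ≤ β) (hβ1 : β < 1) {c : ℕ → ℤ}
    (hc : ∀ k, c k ∈ Set.Icc 0 (N : ℤ)) :
    (1 - β) / N * ∑' k : ℕ, (c k : ℝ) * β ^ k
      = β * ((1 - β) / N * ∑' k : ℕ, (c (k + 1) : ℝ) * β ^ k) + c 0 * (1 - β) / N := by
  rw [(summable_coding hβ0 hβ1 hc).tsum_eq_zero_add]
  simp only [pow_succ, ← mul_assoc, tsum_mul_right]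
  ring

lemma Gamma_subset_Icc (hN : 0 < N) (hβ0 : 0 ≤ β) (hβ1 : β < 1) :
    Gamma N β ⊆ Set.Icc 0 1 := by
  rintro _ ⟨c, hc, rfl⟩
  have hA : 0 ≤ (1 - β) / N := div_nonneg (by linarith) (Nat.cast_nonneg N)
  refine ⟨mul_nonneg hA (tsum_nonneg fun k => mul_nonneg ?_ (pow_nonneg hβ0 k)), ?_⟩
  · exact_mod_cast (hc k).1
  refine (mul_le_mul_of_nonneg_left (Summable.tsum_le_tsum (fun k => ?_)
    (summable_coding hβ0 hβ1 hc) ((summable_geometric_of_lt_one hβ0 hβ1).mul_left _)) hA).trans_eq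
    (div_mul_tsum_const_mul_geometric hN hβ0 hβ1)
  exact mul_le_mul_of_nonneg_right (by exact_mod_cast (hc k).2) (pow_nonneg hβ0 k)

lemma zero_mem_Gamma : (0 : ℝ) ∈ Gamma N β :=
  ⟨0, fun _ => ⟨le_rfl, Int.natCast_nonneg N⟩, by simp⟩

lemma one_mem_Gamma (hN : 0 < N) (hβ0 : 0 ≤ β) (hβ1 : β < 1) : (1 : ℝ) ∈ Gamma N β :=
  ⟨fun _ => N, fun _ => ⟨Int.natCast_nonneg N, le_rfl⟩, by
    simpa using (div_mul_tsum_const_mul_geometric hN hβ0 hβ1).symm⟩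

lemma one_sub_mem_Gamma (hN : 0 < N) (hβ0 : 0 ≤ β) (hβ1 : β < 1) {x : ℝ}
    (hx : x ∈ Gamma N β) : 1 - x ∈ Gamma N β := by
  obtain ⟨c, hc, rfl⟩ := hx
  refine ⟨fun k => N - c k, fun k => ⟨by linarith [(hc k).2], by linarith [(hc k).1]⟩, ?_⟩
  have hsum : ∑' k : ℕ, ((N - c k : ℤ) : ℝ) * β ^ k
      = ∑' k : ℕ, (N : ℝ) * β ^ k - ∑' k : ℕ, (c k : ℝ) * β ^ k := by
    rw [← ((summable_geometric_of_lt_one hβ0 hβ1).mul_left _).tsum_sub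
      (summable_coding hβ0 hβ1 hc)]
    exact tsum_congr fun k => by push_cast; ring
  rw [hsum, mul_sub, div_mul_tsum_const_mul_geometric hN hβ0 hβ1]

lemma phi_mem_Gamma (hβ0 : 0 ≤ β) (hβ1 : β < 1) {i : ℕ} (hi : i ≤ N) {x : ℝ}
    (hx : x ∈ Gamma N β) : phi N β i x ∈ Gamma N β := by
  obtain ⟨c, hc, rfl⟩ := hx
  let c' : ℕ → ℤ := fun k => Nat.casesOn k i c
  have hc'0 : c' 0 = i := rfl
  have hc'succ : ∀ k, c' (k + 1) = c k := fun _ => rfl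
  have hc' : ∀ k, c' k ∈ Set.Icc 0 (N : ℤ) := by
    rintro (_ | k)
    · exact ⟨Int.natCast_nonneg i, by rw [hc'0]; exact_mod_cast hi⟩
    · exact hc k
  refine ⟨c', hc', ?_⟩
  simp only [coding_eq_phi hβ0 hβ1 hc', hc'0, hc'succ, phi, Int.cast_natCast]

lemma exists_eq_phi_of_mem_Gamma (hβ0 : 0 ≤ β) (hβ1 : β < 1) {x : ℝ} (hx : x ∈ Gamma N β) :
    ∃ i ≤ N, ∃ y ∈ Gamma N β, x = phi N β i y := by
  obtain ⟨c, hc, rfl⟩ := hx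
  refine ⟨(c 0).toNat, by have := (hc 0).2; omega, _, ⟨_, fun k => hc (k + 1), rfl⟩, ?_⟩
  rw [coding_eq_phi hβ0 hβ1 hc, phi]
  congr 3
  exact_mod_cast (Int.toNat_of_nonneg (hc 0).1).symm

end Gamma

/-- The interval `φ_i([0, 1])`. -/
def cylinder (N : ℕ) (β : ℝ) (i : ℕ) : Set ℝ := Set.Icc (i * (1 - β) / N) (i * (1 - β) / N + β)

section Cylinder

variable {N : ℕ} {β : ℝ}

lemma beta_lt_one (hβ : β < 1 / (2 * N + 1)) : β < 1 :=
  hβ.trans_le (div_le_one_of_le₀ (by linarith [(Nat.cast_nonneg N : (0 : ℝ) ≤ N)]) (by positivity))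

lemma beta_lt_gap (hN : 0 < N) (hβ : β < 1 / (2 * N + 1)) : β < (1 - β) / N - β := by
  have hN' : (0 : ℝ) < N := by exact_mod_cast hN
  rw [lt_div_iff₀ (by positivity)] at hβ
  rw [lt_sub_iff_add_lt, lt_div_iff₀ hN']
  linarith

lemma phi_mem_cylinder (hβ0 : 0 ≤ β) {y : ℝ} (hy : y ∈ Set.Icc 0 1) (i : ℕ) :
    phi N β i y ∈ cylinder N β i := by
  simp only [phi, cylinder, Set.mem_Icc]
  constructor <;> nlinarith [hy.1, hy.2]

lemma exists_mem_cylinder_of_mem_Gamma (hN : 0 < N) (hβ0 : 0 ≤ β) (hβ1 : β < 1) {x : ℝ}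
    (hx : x ∈ Gamma N β) : ∃ i ≤ N, x ∈ cylinder N β i := by
  obtain ⟨i, hi, y, hy, rfl⟩ := exists_eq_phi_of_mem_Gamma hβ0 hβ1 hx
  exact ⟨i, hi, phi_mem_cylinder hβ0 (Gamma_subset_Icc hN hβ0 hβ1 hy) i⟩

lemma gap_le_sub_of_mem_cylinder (hβ1 : β ≤ 1) {i j : ℕ} (hij : i < j) {x y : ℝ}
    (hx : x ∈ cylinder N β i) (hy : y ∈ cylinder N β j) : (1 - β) / N - β ≤ y - x := by
  have hj : ((i : ℝ) + 1) * (1 - β) / N ≤ j * (1 - β) / N := by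
    gcongr
    exact_mod_cast hij
  have hsplit : ((i : ℝ) + 1) * (1 - β) / N = i * (1 - β) / N + (1 - β) / N := by ring
  linarith [hx.2, hy.1]

lemma eq_of_mem_cylinder_of_abs_sub_lt (hβ1 : β ≤ 1) {i j : ℕ} {x y : ℝ}
    (hx : x ∈ cylinder N β i) (hy : y ∈ cylinder N β j) (hxy : |x - y| < (1 - β) / N - β) :
    i = j := by
  rcases lt_trichotomy i j with hij | hij | hij
  · linarith [gap_le_sub_of_mem_cylinder hβ1 hij hx hy, neg_abs_le (x - y)]
  · exact hij
  · linarith [gap_le_sub_of_mem_cylinder hβ1 hij hy hx, le_abs_self (x - y)]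

lemma mem_cylinder_of_abs_sub_lt (hN : 0 < N) (hβ0 : 0 ≤ β) (hβ1 : β < 1) {i : ℕ} {x y : ℝ}
    (hx : x ∈ cylinder N β i) (hy : y ∈ Gamma N β) (hxy : |y - x| < (1 - β) / N - β) :
    y ∈ cylinder N β i := by
  obtain ⟨j, -, hj⟩ := exists_mem_cylinder_of_mem_Gamma hN hβ0 hβ1 hy
  rwa [eq_of_mem_cylinder_of_abs_sub_lt hβ1.le hx hj (by rwa [abs_sub_comm])]

lemma exists_eq_phi_of_mem_cylinder (hN : 0 < N) (hβ0 : 0 ≤ β) (hβ1 : β < 1)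
    (hgap : 0 < (1 - β) / N - β) {i : ℕ} {x : ℝ} (hx : x ∈ Gamma N β)
    (hxi : x ∈ cylinder N β i) : ∃ y ∈ Gamma N β, x = phi N β i y := by
  obtain ⟨j, -, y, hy, rfl⟩ := exists_eq_phi_of_mem_Gamma hβ0 hβ1 hx
  have hji := eq_of_mem_cylinder_of_abs_sub_lt hβ1.le
    (phi_mem_cylinder hβ0 (Gamma_subset_Icc hN hβ0 hβ1 hy) j) hxi (by simpa using hgap)
  exact ⟨y, hy, by rw [hji]⟩

end Cylinder

section AffineSelfMaps

variable {N : ℕ} {β : ℝ}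

lemma mem_cylinder_of_mapsTo_Gamma (hN : 0 < N) (hβ0 : 0 ≤ β) (hβ1 : β < 1)
    (hgap : 0 < (1 - β) / N - β) {l c : ℝ} (hl0 : 0 < l) (hl1 : l < 1)
    (hf : Set.MapsTo (fun x => l * x + c) (Gamma N β) (Gamma N β)) {i : ℕ} {u v : ℝ}
    (hv : v ∈ Gamma N β) (huv : |v - u| ≤ (1 - β) / N - β) (hu : l * u + c ∈ cylinder N β i) :
    l * v + c ∈ cylinder N β i := by
  refine mem_cylinder_of_abs_sub_lt hN hβ0 hβ1 hu (hf hv) ?_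
  calc |l * v + c - (l * u + c)| = l * |v - u| := by
        rw [← abs_of_pos hl0, ← abs_mul, abs_of_pos hl0]; ring_nf
    _ ≤ l * ((1 - β) / N - β) := by gcongr
    _ < (1 - β) / N - β := mul_lt_of_lt_one_left hgap hl1

/-- The points `φ_0(0), φ_0(1), φ_1(0), …, φ_N(1)` of `Γ` run from `0` to `1` in steps of at most
the gap `(1-β)/N - β`; scaled by `l < 1`, no step can cross a gap, so their images, from `c` to
`l + c`, all stay in one cylinder, of length `β`. -/
lemma le_beta_of_mapsTo_Gamma (hN : 0 < N) (hβ0 : 0 < β) (hβ : β < 1 / (2 * N + 1)) {l c : ℝ}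
    (hl0 : 0 < l) (hl1 : l < 1) (hf : Set.MapsTo (fun x => l * x + c) (Gamma N β) (Gamma N β)) :
    l ≤ β := by
  have hβ1 := beta_lt_one hβ
  have hgap := beta_lt_gap hN hβ
  have hnear := @mem_cylinder_of_mapsTo_Gamma _ _ hN hβ0.le hβ1 (by linarith) _ _ hl0 hl1 hf
  obtain ⟨i, -, hi⟩ := exists_mem_cylinder_of_mem_Gamma hN hβ0.le hβ1
    (by simpa using hf (zero_mem_Gamma (N := N) (β := β)))
  have h0 := zero_mem_Gamma (N := N) (β := β)
  have h1 := one_mem_Gamma hN hβ0.le hβ1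
  have hstep : ∀ k ≤ N, l * phi N β k 0 + c ∈ cylinder N β i →
      l * phi N β k 1 + c ∈ cylinder N β i := fun k hk =>
    hnear (phi_mem_Gamma hβ0.le hβ1 hk h1) (by simp only [phi]; rw [abs_of_nonneg] <;> linarith)
  have hchain : ∀ k ≤ N, l * phi N β k 1 + c ∈ cylinder N β i := by
    intro k hk
    induction k with
    | zero => exact hstep 0 hk (by simpa [phi] using hi)
    | succ k ih =>
      have hdiff : phi N β (k + 1) 0 - phi N β k 1 = (1 - β) / N - β := by
        simp only [phi]
        push_cast
        ring
      refine hstep _ hk (hnear (phi_mem_Gamma hβ0.le hβ1 hk h0) ?_ (ih (by omega)))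
      rw [hdiff, abs_of_nonneg (by linarith)]
  have hlast : phi N β N 1 = 1 := by
    have : (N : ℝ) ≠ 0 := by positivity
    simp only [phi]
    field_simp
    ring
  have hl := hchain N le_rfl
  rw [hlast] at hl
  linarith [hl.2, hi.1]

lemma exists_mapsTo_Gamma_div_beta (hN : 0 < N) (hβ0 : 0 < β) (hβ : β < 1 / (2 * N + 1))
    {l c : ℝ} (hl0 : 0 < l) (hlβ : l < β)
    (hf : Set.MapsTo (fun x => l * x + c) (Gamma N β) (Gamma N β)) :
    ∃ c', Set.MapsTo (fun x => l / β * x + c') (Gamma N β) (Gamma N β) := by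
  have hβ1 := beta_lt_one hβ
  have hgap := beta_lt_gap hN hβ
  obtain ⟨i, -, hi⟩ := exists_mem_cylinder_of_mem_Gamma hN hβ0.le hβ1
    (by simpa using hf (zero_mem_Gamma (N := N) (β := β)))
  refine ⟨(c - i * (1 - β) / N) / β, fun x hx => ?_⟩
  obtain ⟨hx0, hx1⟩ := Gamma_subset_Icc hN hβ0.le hβ1 hx
  have hlx : |l * x + c - c| < (1 - β) / N - β := by
    rw [add_sub_cancel_right, abs_of_nonneg (by positivity)]
    nlinarith
  obtain ⟨y, hy, hxy⟩ := exists_eq_phi_of_mem_cylinder hN hβ0.le hβ1 (by linarith) (hf hx)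
    (mem_cylinder_of_abs_sub_lt hN hβ0.le hβ1 hi (hf hx) hlx)
  convert hy using 1
  simp only [phi] at hxy ⊢
  rw [div_mul_eq_mul_div, ← add_div, div_eq_iff hβ0.ne']
  linear_combination hxy

theorem exists_pow_eq_of_mapsTo_Gamma (hN : 0 < N) (hβ0 : 0 < β) (hβ : β < 1 / (2 * N + 1))
    {l c : ℝ} (hl0 : 0 < l) (hl1 : l < 1)
    (hf : Set.MapsTo (fun x => l * x + c) (Gamma N β) (Gamma N β)) :
    ∃ q, 1 ≤ q ∧ l = β ^ q := by
  obtain ⟨n, hn⟩ := exists_pow_lt_of_lt_one hl0 (beta_lt_one hβ)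
  induction n generalizing l c with
  | zero => linarith [pow_zero β]
  | succ n ih =>
    rcases (le_beta_of_mapsTo_Gamma hN hβ0 hβ hl0 hl1 hf).eq_or_lt with rfl | hlβ
    · exact ⟨1, le_rfl, (pow_one l).symm⟩
    obtain ⟨c', hc'⟩ := exists_mapsTo_Gamma_div_beta hN hβ0 hβ hl0 hlβ hf
    obtain ⟨q, -, hq⟩ := ih (by positivity) ((div_lt_one hβ0).2 hlβ) hc'
      (by rwa [lt_div_iff₀ hβ0, ← pow_succ])
    exact ⟨q + 1, by omega, by rw [pow_succ, ← hq, div_mul_cancel₀ l hβ0.ne']⟩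

theorem exists_pow_eq_abs_of_mapsTo_Gamma (hN : 0 < N) (hβ0 : 0 < β)
    (hβ : β < 1 / (2 * N + 1)) {l c : ℝ} (hl0 : l ≠ 0) (hl1 : |l| < 1)
    (hf : Set.MapsTo (fun x => l * x + c) (Gamma N β) (Gamma N β)) :
    ∃ q, 1 ≤ q ∧ |l| = β ^ q := by
  rcases hl0.lt_or_gt with hneg | hpos
  · refine exists_pow_eq_of_mapsTo_Gamma hN hβ0 hβ (abs_pos.2 hl0) hl1 (c := c + l)
      fun x hx => ?_
    convert hf (one_sub_mem_Gamma hN hβ0.le (beta_lt_one hβ) hx) using 1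
    rw [abs_of_neg hneg]
    ring
  · rw [abs_of_pos hpos] at hl1 ⊢
    exact exists_pow_eq_of_mapsTo_Gamma hN hβ0 hβ hpos hl1 hf

end AffineSelfMaps

theorem IsSelfSimilar.exists_contraction {E : Set ℝ} {L : ℝ} (hE : IsSelfSimilar E)
    (h0 : IsLeast E 0) (hL : IsGreatest E L) :
    (∃ ρ, 0 < ρ ∧ ρ < 1 ∧ Set.MapsTo (ρ * ·) E E) ∨
      ∃ ρ, 0 < ρ ∧ ρ < 1 ∧ Set.MapsTo (fun x => L - ρ * (L - x)) E E := by
  obtain ⟨-, -, F, hF, hEq⟩ := hE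
  have hmaps : ∀ p ∈ F, Set.MapsTo (fun x => p.1 * x + p.2) E E := fun p hp x hx => by
    rw [hEq]; exact Set.mem_biUnion hp ⟨x, hx, rfl⟩
  have hcover : ∀ y ∈ E, ∃ p ∈ F, y ∈ (fun x => p.1 * x + p.2) '' E := fun y hy => by
    rw [hEq] at hy; simpa using hy
  have hmono : ∀ {a : ℝ} (c : ℝ), 0 < a → Monotone fun x => a * x + c :=
    fun c ha x y hxy => by dsimp only; nlinarith
  have hanti : ∀ {a : ℝ} (c : ℝ), a < 0 → Antitone fun x => a * x + c :=
    fun c ha x y hxy => by dsimp only; nlinarith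
  obtain ⟨p, hp, hp0⟩ := hcover 0 h0.1
  obtain ⟨p', hp', hpL⟩ := hcover L hL.1
  obtain ⟨hp1, hp2⟩ := hF p hp
  obtain ⟨hp'1, hp'2⟩ := hF p' hp'
  rcases (abs_pos.1 hp1).lt_or_gt with hneg | hpos
  · have hpL0 := h0.apply_eq_of_antitone hL (hanti _ hneg) (hmaps p hp) hp0
    rcases (abs_pos.1 hp'1).lt_or_gt with hneg' | hpos'
    · have hp'0 := hL.apply_eq_of_antitone h0 (hanti _ hneg') (hmaps p' hp') hpL
      refine .inl ⟨p.1 * p'.1, mul_pos_of_neg_of_neg hneg hneg', ?_, fun x hx => ?_⟩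
      · rw [← abs_of_pos (mul_pos_of_neg_of_neg hneg hneg'), abs_mul]
        exact mul_lt_one_of_nonneg_of_lt_one_left (abs_nonneg _) hp2 hp'2.le
      · convert hmaps p hp (hmaps p' hp' hx) using 1
        simp only at hpL0 hp'0 ⊢
        linear_combination (-1 : ℝ) * hpL0 - p.1 * hp'0
    · have hp'L := hL.apply_eq_of_monotone (hmono _ hpos') (hmaps p' hp') hpL
      refine .inr ⟨p'.1, hpos', by rwa [abs_of_pos hpos'] at hp'2, fun x hx => ?_⟩
      convert hmaps p' hp' hx using 1
      simp only at hp'L ⊢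
      linear_combination (-1 : ℝ) * hp'L
  · have hp00 := h0.apply_eq_of_monotone (hmono _ hpos) (hmaps p hp) hp0
    refine .inl ⟨p.1, hpos, by rwa [abs_of_pos hpos] at hp2, fun x hx => ?_⟩
    convert hmaps p hp hx using 1
    simp only at hp00 ⊢
    linear_combination (-1 : ℝ) * hp00

section GammaT

variable {N : ℕ} {β : ℝ} {m : ℕ} {t : Fin (m + 1) → ℝ}

lemma mem_GammaT_iff {x : ℝ} : x ∈ GammaT N β t ↔ ∃ j, ∃ g ∈ Gamma N β, g + t j = x := by
  simp only [GammaT, Set.mem_iUnion, Set.mem_image]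

lemma add_mem_GammaT {g : ℝ} (hg : g ∈ Gamma N β) (j : Fin (m + 1)) :
    g + t j ∈ GammaT N β t :=
  mem_GammaT_iff.2 ⟨j, g, hg, rfl⟩

lemma Gamma_subset_GammaT (ht0 : t 0 = 0) : Gamma N β ⊆ GammaT N β t := fun g hg => by
  simpa [ht0] using add_mem_GammaT (t := t) hg 0

lemma GammaT_subset_Icc (hN : 0 < N) (hβ0 : 0 ≤ β) (hβ1 : β < 1) (ht0 : t 0 = 0)
    (hmono : Monotone t) : GammaT N β t ⊆ Set.Icc 0 (t (Fin.last m) + 1) := by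
  intro x hx
  obtain ⟨j, g, hg, rfl⟩ := mem_GammaT_iff.1 hx
  obtain ⟨hg0, hg1⟩ := Gamma_subset_Icc hN hβ0 hβ1 hg
  have h0 : t 0 ≤ t j := hmono (Fin.zero_le j)
  have hlast : t j ≤ t (Fin.last m) := hmono (Fin.le_last j)
  constructor <;> linarith

lemma exists_pos_forall_mem_GammaT_lt (hN : 0 < N) (hβ0 : 0 ≤ β) (hβ1 : β < 1)
    (ht0 : t 0 = 0) (hmono : StrictMono t) :
    ∃ ε > 0, ∀ x ∈ GammaT N β t, x < ε → x ∈ Gamma N β := by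
  obtain ⟨j₀, hj₀⟩ := Finite.exists_min fun j => if j = 0 then (1 : ℝ) else t j
  have hpos : ∀ {j : Fin (m + 1)}, j ≠ 0 → 0 < t j := fun hj =>
    ht0 ▸ hmono (Fin.pos_of_ne_zero hj)
  refine ⟨if j₀ = 0 then 1 else t j₀, ?_, fun x hx hxε => ?_⟩
  · split_ifs with h
    exacts [one_pos, hpos h]
  obtain ⟨j, g, hg, rfl⟩ := mem_GammaT_iff.1 hx
  by_cases hj : j = 0
  · simpa [hj, ht0] using hg
  · have := hj₀ j
    rw [if_neg hj] at this
    linarith [(Gamma_subset_Icc hN hβ0 hβ1 hg).1]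

lemma conj_apply (t : Fin (m + 1) → ℝ) (j : Fin (m + 1)) :
    conj t j = t (Fin.last m) - t j.rev := by
  simp only [conj]
  congr 2
  ext
  simp only [Fin.val_rev]
  omega

lemma conj_zero (t : Fin (m + 1) → ℝ) : conj t 0 = 0 := by
  simp [conj_apply]

lemma strictMono_conj (ht : StrictMono t) : StrictMono (conj t) := fun i j hij => by
  simp only [conj_apply]
  linarith [ht (Fin.rev_lt_rev.2 hij)]

lemma mem_GammaT_conj_iff (hN : 0 < N) (hβ0 : 0 ≤ β) (hβ1 : β < 1) {x : ℝ} :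
    x ∈ GammaT N β (conj t) ↔ t (Fin.last m) + 1 - x ∈ GammaT N β t := by
  simp only [mem_GammaT_iff, conj_apply]
  constructor
  · rintro ⟨j, g, hg, rfl⟩
    exact ⟨j.rev, 1 - g, one_sub_mem_Gamma hN hβ0 hβ1 hg, by ring⟩
  · rintro ⟨j, g, hg, hx⟩
    exact ⟨j.rev, 1 - g, one_sub_mem_Gamma hN hβ0 hβ1 hg, by rw [Fin.rev_rev]; linarith⟩

theorem abs_eq_pow_of_mapsTo_GammaT (hN : 0 < N) (hβ0 : 0 < β) (hβ : β < 1 / (2 * N + 1))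
    (ht0 : t 0 = 0) (hmono : StrictMono t) {ρ : ℝ} (hρ0 : 0 < ρ) (hρ1 : ρ < 1)
    (hρ : Set.MapsTo (ρ * ·) (GammaT N β t) (GammaT N β t)) {r b : ℝ} (hr0 : r ≠ 0)
    (hr1 : |r| < 1) (hf : Set.MapsTo (fun x => r * x + b) (GammaT N β t) (GammaT N β t)) :
    ∃ q, 1 ≤ q ∧ |r| = β ^ q := by
  have hβ1 := beta_lt_one hβ
  obtain ⟨ε, hε, hloc⟩ := exists_pos_forall_mem_GammaT_lt hN hβ0.le hβ1 ht0 hmono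
  obtain ⟨n, hn, hn0⟩ : ∃ n, ρ ^ n * (t (Fin.last m) + 1) < ε ∧ n ≠ 0 :=
    ((((tendsto_pow_atTop_nhds_zero_of_lt_one hρ0.le hρ1).mul_const _).eventually
      (gt_mem_nhds (by simpa using hε))).and (Filter.eventually_ne_atTop 0)).exists
  have hs0 : 0 < ρ ^ n := pow_pos hρ0 n
  have hs1 : ρ ^ n < 1 := pow_lt_one₀ hρ0.le hρ1 hn0
  have hsΓ : ∀ x ∈ GammaT N β t, ρ ^ n * x ∈ Gamma N β := fun x hx => by
    refine hloc _ (by simpa [mul_left_iterate] using hρ.iterate n hx) ?_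
    nlinarith [(GammaT_subset_Icc hN hβ0.le hβ1 ht0 hmono.monotone hx).2]
  obtain ⟨q, -, hq⟩ := exists_pow_eq_of_mapsTo_Gamma hN hβ0 hβ hs0 hs1 (c := 0)
    fun x hx => by simpa using hsΓ x (Gamma_subset_GammaT ht0 hx)
  have hsr1 : |ρ ^ n * r| < 1 := by
    rw [abs_mul, abs_of_pos hs0]
    exact mul_lt_one_of_nonneg_of_lt_one_left hs0.le hs1 hr1.le
  obtain ⟨q', -, hq'⟩ := exists_pow_eq_abs_of_mapsTo_Gamma hN hβ0 hβ (c := ρ ^ n * b)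
    (mul_ne_zero hs0.ne' hr0) hsr1 fun x hx => by
      convert hsΓ _ (hf (Gamma_subset_GammaT ht0 hx)) using 1
      ring
  rw [abs_mul, abs_of_pos hs0, hq] at hq'
  have hβq : 0 < β ^ q := pow_pos hβ0 q
  have hqq' : q < q' := by
    by_contra! h
    nlinarith [pow_le_pow_of_le_one hβ0.le hβ1.le h]
  refine ⟨q' - q, by omega, mul_left_cancel₀ hβq.ne' ?_⟩
  rw [hq', pow_mul_pow_sub β hqq'.le]

end GammaT

/-- Suppose `0 < β < 1/(2N+1)` and `Γ_t = ⋃_{j=0}^m (Γ + t_j)` is a self-similar set,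
where `0 = t_0 < ⋯ < t_m`. If `r·Γ_t + b ⊆ Γ_t` with `0 < |r| < 1`, then `|r| = β^q` for
some `q ∈ ℤ_+`. -/
theorem stmt14 (N : ℕ) (hN : 0 < N) (β : ℝ) (hβ0 : 0 < β) (hβ1 : β < 1 / (2 * N + 1))
    (m : ℕ) (t : Fin (m + 1) → ℝ) (ht0 : t 0 = 0) (hmono : StrictMono t)
    (hss : IsSelfSimilar (GammaT N β t))
    (r b : ℝ) (hr0 : 0 < |r|) (hr1 : |r| < 1)
    (h : ∀ x ∈ GammaT N β t, r * x + b ∈ GammaT N β t) :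
    ∃ q : ℕ, 1 ≤ q ∧ |r| = β ^ q := by
  have hβ1' := beta_lt_one hβ1
  set L := t (Fin.last m) + 1
  have hE := GammaT_subset_Icc hN hβ0.le hβ1' ht0 hmono.monotone
  have hleast : IsLeast (GammaT N β t) 0 :=
    ⟨Gamma_subset_GammaT ht0 zero_mem_Gamma, fun x hx => (hE hx).1⟩
  have hgreatest : IsGreatest (GammaT N β t) L :=
    ⟨by simpa [L, add_comm] using add_mem_GammaT (one_mem_Gamma hN hβ0.le hβ1') (Fin.last m),
      fun x hx => (hE hx).2⟩
  rcases hss.exists_contraction hleast hgreatest with ⟨ρ, hρ0, hρ1, hρ⟩ | ⟨ρ, hρ0, hρ1, hρ⟩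
  · exact abs_eq_pow_of_mapsTo_GammaT hN hβ0 hβ1 ht0 hmono hρ0 hρ1 hρ (abs_pos.1 hr0) hr1 h
  · have hconj := fun x => mem_GammaT_conj_iff (t := t) hN hβ0.le hβ1' (x := x)
    refine abs_eq_pow_of_mapsTo_GammaT (b := L - r * L - b) hN hβ0 hβ1 (conj_zero t)
      (strictMono_conj hmono) hρ0 hρ1 (fun x hx => ?_) (abs_pos.1 hr0) hr1 (fun x hx => ?_)
    · rw [hconj] at hx ⊢
      convert hρ hx using 1
      ring
    · rw [hconj] at hx ⊢
      convert h _ hx using 1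
      ring

end HSCantor
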